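/- Let X be a Lévy process with positive sojourn time A_t, let q > 0 and let E^{(q)} ~ Exp(q) be independent of X. Then E[A_{E^{(q)}}] = ∫_0^∞ P(X_t > 0) e^{−qt} dt ≤ 1/q, and Var(A_{E^{(q)}}) = ∫_0^∞ P(X_t > 0) · t · e^{−qt} dt. -/

import Mathlib

open MeasureTheory ProbabilityTheory Real Set Filter

noncomputable section

variable {Ω : Type*} [MeasurableSpace Ω]

/-- The positive sojourn time of a process `X` up to time `t`:
`A_t := ∫_0^t 1{X_s > 0} ds`. -/
def sojourn (X : ℝ → Ω → ℝ) (t : ℝ) (ω : Ω) : ℝ :=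
  ∫ s in (0:ℝ)..t, (if 0 < X s ω then (1:ℝ) else 0)

/-- A real-valued Lévy process issued from the origin: càdlàg paths a.s.,
`X 0 = 0` a.s., stationary increments, and increments independent of the past. -/
structure IsLevyProcess (P : Measure Ω) (X : ℝ → Ω → ℝ) : Prop where
  measurable : ∀ t, Measurable (X t)
  start : ∀ᵐ ω ∂P, X 0 ω = 0
  cadlag : ∀ᵐ ω ∂P, ∀ t : ℝ, 0 ≤ t →
      ContinuousWithinAt (fun s => X s ω) (Set.Ici t) t ∧
      (0 < t → ∃ l : ℝ, Filter.Tendsto (fun s => X s ω) (nhdsWithin t (Set.Iio t)) (nhds l))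
  stationary : ∀ s t : ℝ, 0 ≤ s → s ≤ t →
      P.map (fun ω => X t ω - X s ω) = P.map (X (t - s))
  indep : ∀ s t : ℝ, 0 ≤ s → s ≤ t → ∀ (n : ℕ) (u : Fin n → ℝ),
      (∀ i, 0 ≤ u i ∧ u i ≤ s) →
      IndepFun (fun ω => X t ω - X s ω) (fun ω (i : Fin n) => X (u i) ω) P

/-!
Write `A_E = ∫₀^∞ 1{s < E, X_s > 0} ds`. By Tonelli and the independence of `E`,
`E[A_E] = ∫ P(E > s) P(X_s > 0) ds` and `E[A_E²] = ∫∫ P(E > s ∨ t) P(X_s > 0, X_t > 0) ds dt`,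
with `P(E > s) = e^{-qs}`. Since `(X_s, X_{s+u} - X_s)` and `(X_{s+u} - X_u, X_u)` both have law
`μ_s ⊗ μ_u`, inclusion–exclusion gives
`P(X_s > 0, X_{s+u} > 0) + P(X_u > 0, X_{s+u} > 0) = P(X_{s+u} > 0) + P(X_s > 0) P(X_u > 0)`,
which turns the double integral into `∫ t e^{-qt} P(X_t > 0) dt + E[A_E]²`.
Tonelli needs joint measurability in `(s, ω)`; it comes from reading the càdlàg paths along
dyadic times decreasing to `s`.
-/

open scoped ENNReal Topology

section RightVersion

def dyadicCeil (n : ℕ) (s : ℝ) : ℝ := ⌈s * 2 ^ n⌉ / 2 ^ n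

lemma le_dyadicCeil (n : ℕ) (s : ℝ) : s ≤ dyadicCeil n s := by
  rw [dyadicCeil, le_div_iff₀ (by positivity)]
  exact Int.le_ceil _

lemma dyadicCeil_le_add (n : ℕ) (s : ℝ) : dyadicCeil n s ≤ s + (2 ^ n)⁻¹ := by
  rw [dyadicCeil, div_le_iff₀ (by positivity), add_mul, inv_mul_cancel₀ (by positivity)]
  exact (Int.ceil_lt_add_one _).le

lemma tendsto_dyadicCeil (s : ℝ) : Tendsto (dyadicCeil · s) atTop (𝓝[≥] s) := by
  refine tendsto_nhdsWithin_of_tendsto_nhds_of_eventually_within _ ?_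
    (Eventually.of_forall (le_dyadicCeil · s))
  have h : Tendsto (fun n : ℕ => s + (2 ^ n)⁻¹) atTop (𝓝 (s + 0)) :=
    tendsto_const_nhds.add
      (tendsto_inv_atTop_zero.comp (tendsto_pow_atTop_atTop_of_one_lt one_lt_two))
  rw [add_zero] at h
  exact tendsto_of_tendsto_of_tendsto_of_le_of_le tendsto_const_nhds h (le_dyadicCeil · s)
    (dyadicCeil_le_add · s)

def dyadicRightLimsup (f : ℝ → ℝ) (s : ℝ) : ℝ := limsup (fun n => f (dyadicCeil n s)) atTop

lemma ContinuousWithinAt.dyadicRightLimsup_eq {f : ℝ → ℝ} {s : ℝ}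
    (hf : ContinuousWithinAt f (Ici s) s) : dyadicRightLimsup f s = f s :=
  (hf.tendsto.comp (tendsto_dyadicCeil s)).limsup_eq

lemma measurable_dyadicRightLimsup : Measurable dyadicRightLimsup :=
  measurable_pi_lambda _ fun _ => Measurable.limsup fun _ => measurable_pi_apply _

/-- A modification of `X` that is jointly measurable in `(s, ω)`; it agrees with `X s ω`
wherever the path `X · ω` is right-continuous at `s`. -/
def rightVersion (X : ℝ → Ω → ℝ) (s : ℝ) (ω : Ω) : ℝ := dyadicRightLimsup (fun r => X r ω) s

lemma measurable_uncurry_rightVersion {X : ℝ → Ω → ℝ} (hX : ∀ t, Measurable (X t)) :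
    Measurable (Function.uncurry (rightVersion X)) := by
  refine Measurable.limsup fun n => ?_
  have hdyadic : Measurable fun z : ℤ × Ω => X (z.1 / 2 ^ n) z.2 :=
    measurable_from_prod_countable_right fun k : ℤ => hX (k / 2 ^ n)
  exact hdyadic.comp (((measurable_fst.mul_const _).ceil).prodMk measurable_snd)

lemma ProbabilityTheory.IndepFun.comp_rightVersion {P : Measure Ω} {β : Type*}
    [MeasurableSpace β] {E : Ω → β} {X : ℝ → Ω → ℝ} (h : IndepFun E (fun ω s => X s ω) P) :
    IndepFun E (fun ω s => rightVersion X s ω) P :=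
  h.comp measurable_id measurable_dyadicRightLimsup

end RightVersion

section ExponentialTime

variable {P : Measure Ω} {q : ℝ} {E : Ω → ℝ}

lemma expMeasure_Ioi {a : ℝ} (hq : 0 < q) (ha : 0 ≤ a) :
    expMeasure q (Ioi a) = ENNReal.ofReal (exp (-q * a)) := by
  have := isProbabilityMeasure_expMeasure hq
  rw [← ofReal_measureReal, ← compl_Iic, probReal_compl_eq_one_sub measurableSet_Iic,
    ← cdf_eq_real, cdf_expMeasure_eq hq, if_pos ha, sub_sub_cancel, neg_mul]

lemma ae_pos_of_map_eq_expMeasure (hq : 0 < q) (hE : Measurable E)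
    (hEdist : P.map E = expMeasure q) : ∀ᵐ ω ∂P, 0 < E ω := by
  have := isProbabilityMeasure_expMeasure hq
  refine ae_of_ae_map hE.aemeasurable (hEdist ▸ ?_)
  rw [ae_iff, show {x : ℝ | ¬0 < x} = (Ioi 0)ᶜ by ext; simp,
    prob_compl_eq_one_sub measurableSet_Ioi, expMeasure_Ioi hq le_rfl]
  simp

lemma measure_lt_and_mem_of_indepFun {β : Type*} [MeasurableSpace β] {Z : Ω → β} (hq : 0 < q)
    (hE : Measurable E) (hEdist : P.map E = expMeasure q) (hEZ : IndepFun E Z P)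
    {B : Set β} (hB : MeasurableSet B) {a : ℝ} (ha : 0 ≤ a) :
    P {ω | a < E ω ∧ Z ω ∈ B} = ENNReal.ofReal (exp (-q * a)) * P (Z ⁻¹' B) := by
  rw [show {ω | a < E ω ∧ Z ω ∈ B} = E ⁻¹' Ioi a ∩ Z ⁻¹' B from rfl,
    hEZ.measure_inter_preimage_eq_mul _ _ measurableSet_Ioi hB,
    ← Measure.map_apply hE measurableSet_Ioi, hEdist, expMeasure_Ioi hq ha]

end ExponentialTime

section RandomSet

variable {α : Type*} [MeasurableSpace α] {μ : Measure α} [SFinite μ] {P : Measure Ω} [SFinite P]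
  {S : Set (α × Ω)}

/-- Robbins' formula for the expected measure of a random set. -/
lemma lintegral_measure_slice_eq (hS : MeasurableSet S) :
    ∫⁻ ω, μ ((·, ω) ⁻¹' S) ∂P = ∫⁻ a, P (Prod.mk a ⁻¹' S) ∂μ := by
  rw [← Measure.prod_apply_symm hS, Measure.prod_apply hS]

lemma lintegral_measure_slice_sq_eq (hS : MeasurableSet S) :
    ∫⁻ ω, μ ((·, ω) ⁻¹' S) ^ 2 ∂P
      = ∫⁻ a, ∫⁻ b, P (Prod.mk a ⁻¹' S ∩ Prod.mk b ⁻¹' S) ∂μ ∂μ := by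
  set S₂ : Set ((α × α) × Ω) := {z | (z.1.1, z.2) ∈ S ∧ (z.1.2, z.2) ∈ S}
  have hS₂ : MeasurableSet S₂ :=
    (hS.preimage (by fun_prop)).inter (hS.preimage (by fun_prop))
  have hsq : ∀ ω, μ ((·, ω) ⁻¹' S) ^ 2 = μ.prod μ ((·, ω) ⁻¹' S₂) := fun ω => by
    rw [sq, ← Measure.prod_prod]
    rfl
  simp_rw [hsq]
  rw [lintegral_measure_slice_eq hS₂,
    lintegral_prod _ (measurable_measure_prodMk_left hS₂).aemeasurable]
  rfl

end RandomSet

section OccupationTime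

variable {P : Measure Ω} {q : ℝ} {E : Ω → ℝ} {Y : ℝ → Ω → ℝ}

def occupationTime (Y : ℝ → Ω → ℝ) (E : Ω → ℝ) (ω : Ω) : ℝ≥0∞ :=
  volume.restrict (Ioi 0) {s | s < E ω ∧ 0 < Y s ω}

lemma measurableSet_occupation (hY : Measurable (Function.uncurry Y)) (hE : Measurable E) :
    MeasurableSet {z : ℝ × Ω | z.1 < E z.2 ∧ 0 < Y z.1 z.2} :=
  (measurableSet_lt measurable_fst (hE.comp measurable_snd)).inter
    (measurableSet_lt measurable_const hY)

lemma measurable_occupationTime (hY : Measurable (Function.uncurry Y)) (hE : Measurable E) :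
    Measurable (occupationTime Y E) :=
  measurable_measure_prodMk_right (measurableSet_occupation hY hE)

lemma sojourn_eq_toReal_occupationTime {X : ℝ → Ω → ℝ} {ω : Ω}
    (hY : Measurable (Function.uncurry Y)) (hE : 0 ≤ E ω) (hYX : ∀ s, 0 ≤ s → Y s ω = X s ω) :
    sojourn X (E ω) ω = (occupationTime Y E ω).toReal := by
  have hYω : Measurable fun s => Y s ω := hY.comp (measurable_id.prodMk measurable_const)
  have hpos : MeasurableSet {s | 0 < Y s ω} := measurableSet_lt measurable_const hYω
  rw [sojourn, intervalIntegral.integral_of_le hE, integral_Ioc_eq_integral_Ioo,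
    setIntegral_congr_fun measurableSet_Ioo (g := {s | 0 < Y s ω}.indicator 1) ?_,
    integral_indicator_one hpos, Measure.real, occupationTime,
    Measure.restrict_apply hpos, Measure.restrict_apply' measurableSet_Ioi]
  · congr 2
    ext s
    simp only [mem_inter_iff, mem_ofPred_eq, mem_Ioo, mem_Ioi]
    tauto
  · intro s hs
    simp [indicator, hYX s hs.1.le]

variable [SFinite P]

lemma measurable_measure_pos (hY : Measurable (Function.uncurry Y)) :
    Measurable fun t => P {ω | 0 < Y t ω} :=
  measurable_measure_prodMk_left (measurableSet_lt measurable_const hY)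

lemma measurable_measure_pos_and_pos (hY : Measurable (Function.uncurry Y)) :
    Measurable (Function.uncurry fun s t => P {ω | 0 < Y s ω ∧ 0 < Y t ω}) :=
  measurable_measure_prodMk_left
    ((measurableSet_lt measurable_const (hY.comp (f := fun z : (ℝ × ℝ) × Ω => (z.1.1, z.2))
      (by fun_prop))).inter
    (measurableSet_lt measurable_const (hY.comp (f := fun z : (ℝ × ℝ) × Ω => (z.1.2, z.2))
      (by fun_prop))))

lemma lintegral_occupationTime (hq : 0 < q) (hY : Measurable (Function.uncurry Y))
    (hE : Measurable E) (hEdist : P.map E = expMeasure q)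
    (hEY : IndepFun E (fun ω s => Y s ω) P) :
    ∫⁻ ω, occupationTime Y E ω ∂P
      = ∫⁻ t in Ioi 0, ENNReal.ofReal (exp (-q * t)) * P {ω | 0 < Y t ω} := by
  rw [show occupationTime Y E = fun ω => volume.restrict (Ioi 0)
      ((·, ω) ⁻¹' {z : ℝ × Ω | z.1 < E z.2 ∧ 0 < Y z.1 z.2}) from rfl,
    lintegral_measure_slice_eq (measurableSet_occupation hY hE)]
  exact setLIntegral_congr_fun measurableSet_Ioi fun t ht =>
    measure_lt_and_mem_of_indepFun hq hE hEdist hEY (B := {f | 0 < f t})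
      (measurableSet_lt measurable_const (measurable_pi_apply t)) (le_of_lt ht)

lemma lintegral_occupationTime_sq (hq : 0 < q) (hY : Measurable (Function.uncurry Y))
    (hE : Measurable E) (hEdist : P.map E = expMeasure q)
    (hEY : IndepFun E (fun ω s => Y s ω) P) :
    ∫⁻ ω, occupationTime Y E ω ^ 2 ∂P
      = ∫⁻ s in Ioi 0, ∫⁻ t in Ioi 0,
          ENNReal.ofReal (exp (-q * max s t)) * P {ω | 0 < Y s ω ∧ 0 < Y t ω} := by
  rw [show (fun ω => occupationTime Y E ω ^ 2) = fun ω => volume.restrict (Ioi 0)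
      ((·, ω) ⁻¹' {z : ℝ × Ω | z.1 < E z.2 ∧ 0 < Y z.1 z.2}) ^ 2 from rfl,
    lintegral_measure_slice_sq_eq (measurableSet_occupation hY hE)]
  refine setLIntegral_congr_fun measurableSet_Ioi fun s hs =>
    setLIntegral_congr_fun measurableSet_Ioi fun t _ => ?_
  refine (congrArg P ?_).trans (measure_lt_and_mem_of_indepFun hq hE hEdist hEY
    (B := {f | 0 < f s ∧ 0 < f t})
    ((measurableSet_lt measurable_const (measurable_pi_apply s)).inter
      (measurableSet_lt measurable_const (measurable_pi_apply t)))
    (le_max_of_le_left (le_of_lt hs)))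
  ext ω
  simp only [mem_inter_iff, mem_preimage, mem_ofPred_eq, max_lt_iff]
  tauto

end OccupationTime

section HalfLineIntegrals

lemma setLIntegral_Ioi_zero_comp_add_left (f : ℝ → ℝ≥0∞) (a : ℝ) :
    ∫⁻ u in Ioi 0, f (a + u) = ∫⁻ t in Ioi a, f t := by
  simpa using (measurePreserving_add_left volume a).setLIntegral_comp_preimage_emb
    (measurableEmbedding_addLeft a) f (Ioi a)

lemma lintegral_lintegral_add {α β : Type*} [MeasurableSpace α] [MeasurableSpace β]
    {μ : Measure α} {ν : Measure β} [SFinite ν] {f g : α → β → ℝ≥0∞}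
    (hf : Measurable (Function.uncurry f)) :
    ∫⁻ x, ∫⁻ y, (f x y + g x y) ∂ν ∂μ = ∫⁻ x, ∫⁻ y, f x y ∂ν ∂μ + ∫⁻ x, ∫⁻ y, g x y ∂ν ∂μ := by
  have hf' : Measurable fun x => ∫⁻ y, f x y ∂ν := hf.lintegral_prod_right'
  rw [← lintegral_add_left hf']
  exact lintegral_congr fun x => lintegral_add_left (hf.comp measurable_prodMk_left) _

lemma setLIntegral_Ioi_Ioi_eq_setLIntegral_Ioi_Ioo {F : ℝ → ℝ → ℝ≥0∞}
    (hF : Measurable (Function.uncurry F)) :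
    ∫⁻ s in Ioi 0, ∫⁻ t in Ioi s, F s t = ∫⁻ t in Ioi 0, ∫⁻ s in Ioo 0 t, F s t := by
  have hD : MeasurableSet {z : ℝ × ℝ | 0 < z.1 ∧ z.1 < z.2} :=
    (measurableSet_lt measurable_const measurable_fst).inter
      (measurableSet_lt measurable_fst measurable_snd)
  calc ∫⁻ s in Ioi 0, ∫⁻ t in Ioi s, F s t
      = ∫⁻ s, ∫⁻ t, {z : ℝ × ℝ | 0 < z.1 ∧ z.1 < z.2}.indicator (Function.uncurry F) (s, t) := by
        rw [← lintegral_indicator measurableSet_Ioi]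
        refine lintegral_congr fun s => ?_
        by_cases hs : 0 < s
        · rw [indicator_of_mem (mem_Ioi.2 hs), ← lintegral_indicator measurableSet_Ioi]
          refine lintegral_congr fun t => ?_
          by_cases ht : s < t <;> simp [indicator, hs, ht]
        · simp [hs]
    _ = ∫⁻ t, ∫⁻ s, {z : ℝ × ℝ | 0 < z.1 ∧ z.1 < z.2}.indicator (Function.uncurry F) (s, t) :=
        lintegral_lintegral_swap ((hF.indicator hD).comp measurable_id).aemeasurable
    _ = ∫⁻ t in Ioi 0, ∫⁻ s in Ioo 0 t, F s t := by
        rw [← lintegral_indicator measurableSet_Ioi]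
        refine lintegral_congr fun t => ?_
        by_cases ht : 0 < t
        · rw [indicator_of_mem (mem_Ioi.2 ht), ← lintegral_indicator measurableSet_Ioo]
          refine lintegral_congr fun s => ?_
          by_cases hs : 0 < s <;> by_cases hst : s < t <;> simp [indicator, hs, hst]
        · rw [indicator_of_notMem (show t ∉ Ioi 0 from ht)]
          refine (lintegral_eq_zero_iff' (by fun_prop)).2 (ae_of_all _ fun s => ?_)
          exact indicator_of_notMem (fun h => ht (h.1.trans h.2)) _

lemma setLIntegral_Ioi_Ioi_eq_add_comp_add {F : ℝ → ℝ → ℝ≥0∞}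
    (hF : Measurable (Function.uncurry F)) :
    ∫⁻ s in Ioi 0, ∫⁻ t in Ioi 0, F s t
      = ∫⁻ s in Ioi 0, ∫⁻ u in Ioi 0, (F s (s + u) + F (s + u) s) := by
  have hF₁ : Measurable fun z : ℝ × ℝ => F z.1 (z.1 + z.2) :=
    hF.comp (f := fun z : ℝ × ℝ => (z.1, z.1 + z.2)) (by fun_prop)
  have hsplit : ∀ s ∈ Ioi (0 : ℝ), ∫⁻ t in Ioi 0, F s t
      = (∫⁻ t in Ioo 0 s, F s t) + ∫⁻ u in Ioi 0, F s (s + u) := by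
    intro s hs
    rw [setLIntegral_Ioi_zero_comp_add_left, ← Ioc_union_Ioi_eq_Ioi (le_of_lt hs),
      lintegral_union measurableSet_Ioi Ioc_disjoint_Ioi_same, setLIntegral_congr Ioo_ae_eq_Ioc]
  have hlower : ∫⁻ s in Ioi 0, ∫⁻ t in Ioo 0 s, F s t
      = ∫⁻ s in Ioi 0, ∫⁻ u in Ioi 0, F (s + u) s := by
    rw [← setLIntegral_Ioi_Ioi_eq_setLIntegral_Ioi_Ioo (F := fun t s => F s t)
      (hF.comp measurable_swap)]
    simp_rw [← setLIntegral_Ioi_zero_comp_add_left (fun s => F s _)]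
  have hm₁ : Measurable fun s => ∫⁻ u in Ioi 0, F s (s + u) := hF₁.lintegral_prod_right'
  rw [setLIntegral_congr_fun measurableSet_Ioi hsplit, lintegral_add_right _ hm₁, hlower,
    add_comm, ← lintegral_add_left hm₁]
  refine lintegral_congr fun s => (lintegral_add_left ?_ _).symm
  exact hF₁.comp measurable_prodMk_left

lemma setLIntegral_Ioi_setLIntegral_Ioi_comp_add {f : ℝ → ℝ≥0∞} (hf : Measurable f) :
    ∫⁻ s in Ioi 0, ∫⁻ u in Ioi 0, f (s + u) = ∫⁻ t in Ioi 0, ENNReal.ofReal t * f t := by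
  simp_rw [setLIntegral_Ioi_zero_comp_add_left f]
  rw [setLIntegral_Ioi_Ioi_eq_setLIntegral_Ioi_Ioo (F := fun _ t => f t) (hf.comp measurable_snd)]
  refine setLIntegral_congr_fun measurableSet_Ioi fun t _ => ?_
  rw [setLIntegral_const, Real.volume_Ioo, sub_zero, mul_comm]

/-- Split the quadrant at the diagonal and write the larger variable as `s + u`; after
symmetrising in `(s, u)`, `hc_add` turns the integrand into
`w (s + u) p (s + u) + (w s p s) (w u p u)`. -/
lemma setLIntegral_Ioi_Ioi_mul_max_eq {w p : ℝ → ℝ≥0∞} {c : ℝ → ℝ → ℝ≥0∞}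
    (hw : Measurable w) (hp : Measurable p) (hc : Measurable (Function.uncurry c))
    (hw_add : ∀ s u, w (s + u) = w s * w u) (hc_symm : ∀ s t, c s t = c t s)
    (hc_add : ∀ s u, 0 < s → 0 < u → c s (s + u) + c u (s + u) = p (s + u) + p s * p u) :
    ∫⁻ s in Ioi 0, ∫⁻ t in Ioi 0, w (max s t) * c s t
      = (∫⁻ t in Ioi 0, ENNReal.ofReal t * (w t * p t)) + (∫⁻ t in Ioi 0, w t * p t) ^ 2 := by
  set G : ℝ → ℝ → ℝ≥0∞ := fun s u => w (s + u) * c s (s + u)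
  have hG : Measurable (Function.uncurry G) :=
    (hw.comp (f := fun z : ℝ × ℝ => z.1 + z.2) (by fun_prop)).mul
      (hc.comp (f := fun z : ℝ × ℝ => (z.1, z.1 + z.2)) (by fun_prop))
  have hwp : Measurable fun t => w t * p t := hw.mul hp
  have hdiag : ∫⁻ s in Ioi 0, ∫⁻ t in Ioi 0, w (max s t) * c s t
      = ∫⁻ s in Ioi 0, ∫⁻ u in Ioi 0, (G s u + G s u) := by
    rw [setLIntegral_Ioi_Ioi_eq_add_comp_add (F := fun s t => w (max s t) * c s t)
      ((hw.comp (measurable_fst.max measurable_snd)).mul hc)]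
    refine lintegral_congr fun s => setLIntegral_congr_fun measurableSet_Ioi fun u hu => ?_
    have hsu : s ≤ s + u := le_add_of_nonneg_right (le_of_lt hu)
    simp only [G, max_eq_right hsu, max_eq_left hsu, hc_symm (s + u) s]
  have hprod : ∫⁻ s in Ioi 0, ∫⁻ u in Ioi 0, w (s + u) * (p s * p u)
      = (∫⁻ t in Ioi 0, w t * p t) ^ 2 := by
    simp_rw [hw_add, show ∀ s u, w s * w u * (p s * p u) = w s * p s * (w u * p u) from
      fun s u => by ring, lintegral_const_mul _ hwp, lintegral_mul_const _ hwp, sq]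
  calc ∫⁻ s in Ioi 0, ∫⁻ t in Ioi 0, w (max s t) * c s t
      = ∫⁻ s in Ioi 0, ∫⁻ u in Ioi 0, (G s u + G s u) := hdiag
    _ = ∫⁻ s in Ioi 0, ∫⁻ u in Ioi 0, (G s u + G u s) := by
        rw [lintegral_lintegral_add hG, lintegral_lintegral_add hG]
        exact congrArg _ (lintegral_lintegral_swap hG.aemeasurable)
    _ = ∫⁻ s in Ioi 0, ∫⁻ u in Ioi 0, (w (s + u) * p (s + u) + w (s + u) * (p s * p u)) := by
        refine setLIntegral_congr_fun measurableSet_Ioi fun s hs =>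
          setLIntegral_congr_fun measurableSet_Ioi fun u hu => ?_
        simp only [G, add_comm u s, ← mul_add, hc_add s u hs hu]
    _ = _ := by
        rw [lintegral_lintegral_add (f := fun s u => w (s + u) * p (s + u))
            (hwp.comp (f := fun z : ℝ × ℝ => z.1 + z.2) (by fun_prop)),
          setLIntegral_Ioi_setLIntegral_Ioi_comp_add hwp, hprod]

end HalfLineIntegrals

lemma setLIntegral_exp_mul_le {q : ℝ} (hq : 0 < q) {p : ℝ → ℝ≥0∞} (hp : ∀ t, p t ≤ 1) :
    ∫⁻ t in Ioi 0, ENNReal.ofReal (exp (-q * t)) * p t ≤ ENNReal.ofReal (1 / q) :=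
  calc ∫⁻ t in Ioi 0, ENNReal.ofReal (exp (-q * t)) * p t
      ≤ ∫⁻ t in Ioi 0, ENNReal.ofReal (exp (-q * t)) :=
        lintegral_mono fun t => mul_le_of_le_one_right' (hp t)
    _ = ENNReal.ofReal (∫ t in Ioi 0, exp (-q * t)) :=
        (ofReal_integral_eq_lintegral_ofReal (exp_neg_integrableOn_Ioi 0 hq)
          (ae_of_all _ fun _ => (exp_pos _).le)).symm
    _ = ENNReal.ofReal (1 / q) := by
        rw [integral_exp_mul_Ioi (neg_lt_zero.2 hq), mul_zero, exp_zero, neg_div_neg_eq]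

lemma setLIntegral_mul_exp_mul_lt_top {q : ℝ} (hq : 0 < q) {p : ℝ → ℝ≥0∞} (hp : ∀ t, p t ≤ 1) :
    ∫⁻ t in Ioi 0, ENNReal.ofReal (t * exp (-q * t)) * p t < ⊤ :=
  calc ∫⁻ t in Ioi 0, ENNReal.ofReal (t * exp (-q * t)) * p t
      ≤ ∫⁻ t in Ioi 0, ENNReal.ofReal (t * exp (-q * t)) :=
        lintegral_mono fun t => mul_le_of_le_one_right' (hp t)
    _ < ⊤ := by
        have h := integrableOn_rpow_mul_exp_neg_mul_rpow (s := 1) (p := 1) (by norm_num) one_pos hq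
        simp only [rpow_one] at h
        exact h.setLIntegral_lt_top

lemma variance_toReal_of_lintegral_sq_eq {P : Measure Ω} [IsProbabilityMeasure P]
    {T : Ω → ℝ≥0∞} (hT : Measurable T) {V : ℝ≥0∞} (hmean : ∫⁻ ω, T ω ∂P ≠ ⊤) (hV : V ≠ ⊤)
    (hsq : ∫⁻ ω, T ω ^ 2 ∂P = V + (∫⁻ ω, T ω ∂P) ^ 2) :
    variance (fun ω => (T ω).toReal) P = V.toReal := by
  have hsq_top : ∫⁻ ω, T ω ^ 2 ∂P ≠ ⊤ := by
    rw [hsq]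
    exact ENNReal.add_ne_top.2 ⟨hV, ENNReal.pow_ne_top hmean⟩
  have hT2 : Measurable fun ω => T ω ^ 2 := hT.pow_const 2
  have hL2 : MemLp (fun ω => (T ω).toReal) 2 P := by
    rw [memLp_two_iff_integrable_sq hT.ennreal_toReal.aestronglyMeasurable]
    simp_rw [← ENNReal.toReal_pow]
    exact integrable_toReal_of_lintegral_ne_top hT2.aemeasurable hsq_top
  rw [variance_eq_sub hL2]
  simp_rw [Pi.pow_apply, ← ENNReal.toReal_pow]
  rw [integral_toReal hT2.aemeasurable (ae_lt_top hT2 hsq_top),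
    integral_toReal hT.aemeasurable (ae_lt_top hT hmean), hsq,
    ENNReal.toReal_add hV (ENNReal.pow_ne_top hmean), ENNReal.toReal_pow, add_sub_cancel_right]

lemma measure_fst_pos_and_add_pos_add_measure_snd_pos_and_add_pos (ν : Measure (ℝ × ℝ)) :
    ν {z | 0 < z.1 ∧ 0 < z.1 + z.2} + ν {z | 0 < z.2 ∧ 0 < z.1 + z.2}
      = ν {z | 0 < z.1 + z.2} + ν {z | 0 < z.1 ∧ 0 < z.2} := by
  have hunion : {z : ℝ × ℝ | 0 < z.1 ∧ 0 < z.1 + z.2} ∪ {z | 0 < z.2 ∧ 0 < z.1 + z.2}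
      = {z | 0 < z.1 + z.2} := by
    ext z; simp only [mem_union, mem_ofPred_eq]
    constructor
    · rintro (h | h) <;> exact h.2
    · intro h
      by_cases h1 : 0 < z.1
      · exact Or.inl ⟨h1, h⟩
      · exact Or.inr ⟨by linarith, h⟩
  have hinter : {z : ℝ × ℝ | 0 < z.1 ∧ 0 < z.1 + z.2} ∩ {z | 0 < z.2 ∧ 0 < z.1 + z.2}
      = {z | 0 < z.1 ∧ 0 < z.2} := by
    ext z; simp only [mem_inter_iff, mem_ofPred_eq]
    constructor
    · rintro ⟨⟨h1, -⟩, h2, -⟩; exact ⟨h1, h2⟩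
    · rintro ⟨h1, h2⟩; exact ⟨⟨h1, by linarith⟩, h2, by linarith⟩
  rw [← hunion, ← hinter, measure_union_add_inter]
  exact (measurableSet_lt measurable_const measurable_snd).inter
    (measurableSet_lt measurable_const (measurable_fst.add measurable_snd))

namespace IsLevyProcess

variable {P : Measure Ω} {X : ℝ → Ω → ℝ}

lemma indepFun_increment (hX : IsLevyProcess P X) {s t : ℝ} (hs : 0 ≤ s) (hst : s ≤ t) :
    IndepFun (fun ω => X t ω - X s ω) (X s) P :=
  (hX.indep s t hs hst 1 (fun _ => s) fun _ => ⟨hs, le_rfl⟩).comp measurable_id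
    (measurable_pi_apply 0)

lemma map_prodMk_increment [IsFiniteMeasure P] (hX : IsLevyProcess P X) {s u : ℝ}
    (hs : 0 ≤ s) (hu : 0 ≤ u) :
    P.map (fun ω => (X s ω, X (s + u) ω - X s ω)) = (P.map (X s)).prod (P.map (X u)) := by
  have hstat := hX.stationary s (s + u) hs (le_add_of_nonneg_right hu)
  rw [add_sub_cancel_left] at hstat
  rw [← hstat]
  exact (indepFun_iff_map_prod_eq_prod_map_map (hX.measurable s).aemeasurable
    ((hX.measurable _).sub (hX.measurable s)).aemeasurable).1
    (hX.indepFun_increment hs (le_add_of_nonneg_right hu)).symm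

lemma measure_pos_and_pos_add [IsFiniteMeasure P] (hX : IsLevyProcess P X) {s u : ℝ}
    (hs : 0 ≤ s) (hu : 0 ≤ u) :
    P {ω | 0 < X s ω ∧ 0 < X (s + u) ω} + P {ω | 0 < X u ω ∧ 0 < X (s + u) ω}
      = P {ω | 0 < X (s + u) ω} + P {ω | 0 < X s ω} * P {ω | 0 < X u ω} := by
  set ν := (P.map (X s)).prod (P.map (X u))
  have hpair : ∀ {a b : ℝ}, 0 ≤ a → 0 ≤ b → ∀ {B : Set (ℝ × ℝ)}, MeasurableSet B →
      P {ω | (X a ω, X (a + b) ω - X a ω) ∈ B} = (P.map (X a)).prod (P.map (X b)) B :=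
    fun ha hb B hB => by
      rw [← hX.map_prodMk_increment ha hb, Measure.map_apply _ hB]
      · rfl
      · exact (hX.measurable _).prodMk ((hX.measurable _).sub (hX.measurable _))
  have h₁ : P {ω | 0 < X s ω ∧ 0 < X (s + u) ω} = ν {z | 0 < z.1 ∧ 0 < z.1 + z.2} := by
    rw [← hpair hs hu]
    · simp
    · measurability
  have h₂ : P {ω | 0 < X u ω ∧ 0 < X (s + u) ω} = ν {z | 0 < z.2 ∧ 0 < z.1 + z.2} := by
    rw [show ν = ((P.map (X u)).prod (P.map (X s))).map Prod.swap from Measure.prod_swap.symm,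
      Measure.map_apply measurable_swap (by measurability), ← hpair hu hs (by measurability)]
    simp [add_comm]
  have h₃ : P {ω | 0 < X (s + u) ω} = ν {z | 0 < z.1 + z.2} := by
    rw [← hpair hs hu]
    · simp
    · measurability
  have h₄ : P {ω | 0 < X s ω} * P {ω | 0 < X u ω} = ν {z | 0 < z.1 ∧ 0 < z.2} := by
    rw [show {z : ℝ × ℝ | 0 < z.1 ∧ 0 < z.2} = Ioi 0 ×ˢ Ioi 0 from rfl, Measure.prod_prod,
      Measure.map_apply (hX.measurable s) measurableSet_Ioi,
      Measure.map_apply (hX.measurable u) measurableSet_Ioi]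
    rfl
  rw [h₁, h₂, h₃, h₄, measure_fst_pos_and_add_pos_add_measure_snd_pos_and_add_pos]

lemma ae_rightVersion_eq (hX : IsLevyProcess P X) :
    ∀ᵐ ω ∂P, ∀ s, 0 ≤ s → rightVersion X s ω = X s ω := by
  filter_upwards [hX.cadlag] with ω hω s hs using (hω s hs).1.dyadicRightLimsup_eq

lemma measure_rightVersion_pos_and_pos (hX : IsLevyProcess P X) {s t : ℝ} (hs : 0 ≤ s)
    (ht : 0 ≤ t) :
    P {ω | 0 < rightVersion X s ω ∧ 0 < rightVersion X t ω} = P {ω | 0 < X s ω ∧ 0 < X t ω} :=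
  measure_congr <| eventuallyEq_set.2 <| hX.ae_rightVersion_eq.mono fun ω h => by
    simp only [mem_ofPred_eq, h s hs, h t ht]

lemma measure_rightVersion_pos (hX : IsLevyProcess P X) {t : ℝ} (ht : 0 ≤ t) :
    P {ω | 0 < rightVersion X t ω} = P {ω | 0 < X t ω} := by
  simpa using hX.measure_rightVersion_pos_and_pos ht ht

lemma sojourn_ae_eq_toReal_occupationTime {E : Ω → ℝ} (hX : IsLevyProcess P X)
    (hE : ∀ᵐ ω ∂P, 0 ≤ E ω) :
    (fun ω => sojourn X (E ω) ω) =ᵐ[P] fun ω => (occupationTime (rightVersion X) E ω).toReal := by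
  filter_upwards [hX.ae_rightVersion_eq, hE] with ω hXω hEω
  exact sojourn_eq_toReal_occupationTime (measurable_uncurry_rightVersion hX.measurable) hEω hXω

lemma setIntegral_Ioi_measure_pos_mul [IsFiniteMeasure P] (hX : IsLevyProcess P X) {g : ℝ → ℝ}
    (hg : Measurable g) (hg_nonneg : ∀ t, 0 < t → 0 ≤ g t) :
    ∫ t in Ioi 0, (P {ω | 0 < X t ω}).toReal * g t
      = (∫⁻ t in Ioi 0, ENNReal.ofReal (g t) * P {ω | 0 < rightVersion X t ω}).toReal := by
  have hm : Measurable fun t => ENNReal.ofReal (g t) * P {ω | 0 < rightVersion X t ω} :=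
    hg.ennreal_ofReal.mul (measurable_measure_pos (measurable_uncurry_rightVersion hX.measurable))
  rw [← integral_toReal hm.aemeasurable
    (ae_of_all _ fun t => ENNReal.mul_lt_top ENNReal.ofReal_lt_top (measure_lt_top _ _))]
  refine setIntegral_congr_fun measurableSet_Ioi fun t ht => ?_
  rw [ENNReal.toReal_mul, ENNReal.toReal_ofReal (hg_nonneg t ht),
    hX.measure_rightVersion_pos (le_of_lt ht), mul_comm]

lemma lintegral_occupationTime_rightVersion_sq [IsFiniteMeasure P] {q : ℝ} {E : Ω → ℝ}
    (hX : IsLevyProcess P X) (hq : 0 < q) (hE : Measurable E) (hEdist : P.map E = expMeasure q)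
    (hEX : IndepFun E (fun ω s => X s ω) P) :
    ∫⁻ ω, occupationTime (rightVersion X) E ω ^ 2 ∂P
      = (∫⁻ t in Ioi 0, ENNReal.ofReal (t * exp (-q * t)) * P {ω | 0 < rightVersion X t ω})
        + (∫⁻ t in Ioi 0, ENNReal.ofReal (exp (-q * t)) * P {ω | 0 < rightVersion X t ω}) ^ 2 := by
  have hY := measurable_uncurry_rightVersion hX.measurable
  have hw_add : ∀ s u, ENNReal.ofReal (exp (-q * (s + u)))
      = ENNReal.ofReal (exp (-q * s)) * ENNReal.ofReal (exp (-q * u)) := fun s u => by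
    rw [mul_add, exp_add, ENNReal.ofReal_mul (exp_pos _).le]
  have hc_add : ∀ s u, 0 < s → 0 < u →
      P {ω | 0 < rightVersion X s ω ∧ 0 < rightVersion X (s + u) ω}
        + P {ω | 0 < rightVersion X u ω ∧ 0 < rightVersion X (s + u) ω}
      = P {ω | 0 < rightVersion X (s + u) ω}
        + P {ω | 0 < rightVersion X s ω} * P {ω | 0 < rightVersion X u ω} := fun s u hs hu => by
    simp only [hX.measure_rightVersion_pos_and_pos, hX.measure_rightVersion_pos, hs.le, hu.le,
      add_nonneg]
    exact hX.measure_pos_and_pos_add hs.le hu.le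
  rw [lintegral_occupationTime_sq hq hY hE hEdist hEX.comp_rightVersion,
    setLIntegral_Ioi_Ioi_mul_max_eq (w := fun t => ENNReal.ofReal (exp (-q * t)))
      (by fun_prop) (measurable_measure_pos hY) (measurable_measure_pos_and_pos hY) hw_add
      (fun s t => by simp only [and_comm]) hc_add]
  congr 1
  refine setLIntegral_congr_fun measurableSet_Ioi fun t ht => ?_
  rw [ENNReal.ofReal_mul (le_of_lt ht), mul_assoc]

end IsLevyProcess

/-- **Mean and variance of the sojourn time at an independent exponential time.**
If `E ~ Exp(q)` is independent of the Lévy process `X`, then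
`E[A_E] = ∫_0^∞ P(X_t > 0) e^{-qt} dt ≤ 1/q` and
`Var(A_E) = ∫_0^∞ P(X_t > 0) t e^{-qt} dt`. -/
theorem sojourn_exponential_mean_variance (P : Measure Ω) [IsProbabilityMeasure P]
    (X : ℝ → Ω → ℝ) (hX : IsLevyProcess P X) (q : ℝ) (hq : 0 < q)
    (E : Ω → ℝ) (hE : Measurable E) (hEdist : P.map E = expMeasure q)
    (hEX : IndepFun E (fun ω (s : ℝ) => X s ω) P) :
    (∫ ω, sojourn X (E ω) ω ∂P
        = ∫ t in Set.Ioi (0:ℝ), (P {ω | 0 < X t ω}).toReal * Real.exp (-q * t)) ∧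
    (∫ ω, sojourn X (E ω) ω ∂P ≤ 1 / q) ∧
    variance (fun ω => sojourn X (E ω) ω) P
        = ∫ t in Set.Ioi (0:ℝ), (P {ω | 0 < X t ω}).toReal * t * Real.exp (-q * t) := by
  have hY := measurable_uncurry_rightVersion hX.measurable
  have hT := measurable_occupationTime hY hE
  have hprob : ∀ t, P {ω | 0 < rightVersion X t ω} ≤ 1 := fun _ => prob_le_one
  have hmean := lintegral_occupationTime hq hY hE hEdist hEX.comp_rightVersion
  have hmean_le := setLIntegral_exp_mul_le hq hprob
  have hmean_top : ∫⁻ ω, occupationTime (rightVersion X) E ω ∂P ≠ ⊤ :=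
    hmean ▸ ne_top_of_le_ne_top ENNReal.ofReal_ne_top hmean_le
  have hsojourn := hX.sojourn_ae_eq_toReal_occupationTime
    ((ae_pos_of_map_eq_expMeasure hq hE hEdist).mono fun _ h => h.le)
  have hRHS₁ := hX.setIntegral_Ioi_measure_pos_mul (g := fun t => exp (-q * t)) (by fun_prop)
    fun t _ => (exp_pos _).le
  have hRHS₂ := hX.setIntegral_Ioi_measure_pos_mul (g := fun t => t * exp (-q * t))
    (by fun_prop) fun t ht => by positivity
  simp_rw [← mul_assoc] at hRHS₂
  rw [integral_congr_ae hsojourn, variance_congr hsojourn,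
    integral_toReal hT.aemeasurable (ae_lt_top hT hmean_top), hmean,
    variance_toReal_of_lintegral_sq_eq hT hmean_top (setLIntegral_mul_exp_mul_lt_top hq hprob).ne
      (hmean ▸ hX.lintegral_occupationTime_rightVersion_sq hq hE hEdist hEX), hRHS₁, hRHS₂]
  exact ⟨rfl, (ENNReal.toReal_mono ENNReal.ofReal_ne_top hmean_le).trans_eq
    (ENNReal.toReal_ofReal (by positivity)), rfl⟩

end
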